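/- Under the same hypotheses as the L^2 conservation (classical solutions of i∂_t u + ∂_x^2 u − ∂_x^4 u = 0 on the star graph with the stated boundary and vertex conditions), the quantity ∫_G (|∂_x u|^2 + |∂_x^2 u|^2) dx is constant in time. -/

import Mathlib

open Complex intervalIntegral

open ComplexConjugate

noncomputable def px (f : ℝ × ℝ → ℂ) (p : ℝ × ℝ) : ℂ := fderiv ℝ f p (0, 1)
noncomputable def pt (f : ℝ × ℝ → ℂ) (p : ℝ × ℝ) : ℂ := fderiv ℝ f p (1, 0)

lemma contDiff_fderiv_apply (f : ℝ × ℝ → ℂ) (hf : ContDiff ℝ (⊤ : ℕ∞) f) (v : ℝ × ℝ) :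
    ContDiff ℝ (⊤ : ℕ∞) (fun p => fderiv ℝ f p v) :=
  (ContinuousLinearMap.apply ℝ ℂ v).contDiff.comp (hf.fderiv_right (by simp))

lemma px_contDiff {f : ℝ × ℝ → ℂ} (hf : ContDiff ℝ (⊤ : ℕ∞) f) : ContDiff ℝ (⊤ : ℕ∞) (px f) :=
  contDiff_fderiv_apply f hf _

lemma pt_contDiff {f : ℝ × ℝ → ℂ} (hf : ContDiff ℝ (⊤ : ℕ∞) f) : ContDiff ℝ (⊤ : ℕ∞) (pt f) :=
  contDiff_fderiv_apply f hf _

lemma hasDerivAt_slice_x (f : ℝ × ℝ → ℂ) (hf : ContDiff ℝ (⊤ : ℕ∞) f) (t x : ℝ) :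
    HasDerivAt (fun y => f (t, y)) (px f (t, x)) x := by
  have h1 : HasFDerivAt f (fderiv ℝ f (t, x)) (t, x) :=
    ((hf.differentiable (by simp)) (t, x)).hasFDerivAt
  have h2 : HasDerivAt (fun y : ℝ => ((t, y) : ℝ × ℝ)) ((0 : ℝ), (1 : ℝ)) x :=
    (hasDerivAt_const x t).prodMk (hasDerivAt_id x)
  exact h1.comp_hasDerivAt x h2

lemma hasDerivAt_slice_t (f : ℝ × ℝ → ℂ) (hf : ContDiff ℝ (⊤ : ℕ∞) f) (t x : ℝ) :
    HasDerivAt (fun τ => f (τ, x)) (pt f (t, x)) t := by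
  have h1 : HasFDerivAt f (fderiv ℝ f (t, x)) (t, x) :=
    ((hf.differentiable (by simp)) (t, x)).hasFDerivAt
  have h2 : HasDerivAt (fun τ : ℝ => ((τ, x) : ℝ × ℝ)) ((1 : ℝ), (0 : ℝ)) t :=
    (hasDerivAt_id t).prodMk (hasDerivAt_const t x)
  exact h1.comp_hasDerivAt t h2

lemma deriv_slice_x (f : ℝ × ℝ → ℂ) (hf : ContDiff ℝ (⊤ : ℕ∞) f) (t x : ℝ) :
    deriv (fun y => f (t, y)) x = px f (t, x) :=
  (hasDerivAt_slice_x f hf t x).deriv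

lemma deriv_slice_x_fun (f : ℝ × ℝ → ℂ) (hf : ContDiff ℝ (⊤ : ℕ∞) f) (t : ℝ) :
    deriv (fun y => f (t, y)) = fun x => px f (t, x) :=
  funext fun x => deriv_slice_x f hf t x

lemma iteratedDeriv_two_slice (f : ℝ × ℝ → ℂ) (hf : ContDiff ℝ (⊤ : ℕ∞) f) (t x : ℝ) :
    iteratedDeriv 2 (fun y => f (t, y)) x = px (px f) (t, x) := by
  rw [iteratedDeriv_succ, iteratedDeriv_one, deriv_slice_x_fun f hf t]
  exact deriv_slice_x (px f) (px_contDiff hf) t x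

lemma iteratedDeriv_three_slice (f : ℝ × ℝ → ℂ) (hf : ContDiff ℝ (⊤ : ℕ∞) f) (t x : ℝ) :
    iteratedDeriv 3 (fun y => f (t, y)) x = px (px (px f)) (t, x) := by
  have h2 : iteratedDeriv 2 (fun y => f (t, y)) = fun x => px (px f) (t, x) :=
    funext fun x => iteratedDeriv_two_slice f hf t x
  rw [show (3:ℕ) = 2 + 1 from rfl, iteratedDeriv_succ, h2]
  exact deriv_slice_x (px (px f)) (px_contDiff (px_contDiff hf)) t x

lemma iteratedDeriv_four_slice (f : ℝ × ℝ → ℂ) (hf : ContDiff ℝ (⊤ : ℕ∞) f) (t x : ℝ) :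
    iteratedDeriv 4 (fun y => f (t, y)) x = px (px (px (px f))) (t, x) := by
  have h3 : iteratedDeriv 3 (fun y => f (t, y)) = fun x => px (px (px f)) (t, x) :=
    funext fun x => iteratedDeriv_three_slice f hf t x
  rw [show (4:ℕ) = 3 + 1 from rfl, iteratedDeriv_succ, h3]
  exact deriv_slice_x (px (px (px f))) (px_contDiff (px_contDiff (px_contDiff hf))) t x

lemma pt_px_comm (f : ℝ × ℝ → ℂ) (hf : ContDiff ℝ (⊤ : ℕ∞) f) (p : ℝ × ℝ) :
    pt (px f) p = px (pt f) p := by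
  have hf' : ContDiff ℝ (⊤ : ℕ∞) (fderiv ℝ f) := hf.fderiv_right (by simp)
  have hd : DifferentiableAt ℝ (fderiv ℝ f) p := (hf'.differentiable (by simp)) p
  have hsymm : ∀ v w, fderiv ℝ (fderiv ℝ f) p v w = fderiv ℝ (fderiv ℝ f) p w v :=
    second_derivative_symmetric (fun y => ((hf.differentiable (by simp)) y).hasFDerivAt)
      hd.hasFDerivAt
  have e1 : ∀ v w : ℝ × ℝ, fderiv ℝ (fun q => fderiv ℝ f q v) p w
      = fderiv ℝ (fderiv ℝ f) p w v := by
    intro v w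
    have : HasFDerivAt (fun q => fderiv ℝ f q v)
        ((ContinuousLinearMap.apply ℝ ℂ v).comp (fderiv ℝ (fderiv ℝ f) p)) p :=
      (ContinuousLinearMap.apply ℝ ℂ v).hasFDerivAt.comp p hd.hasFDerivAt
    rw [this.fderiv]; rfl
  show fderiv ℝ (fun q => fderiv ℝ f q (0,1)) p (1,0)
      = fderiv ℝ (fun q => fderiv ℝ f q (1,0)) p (0,1)
  rw [e1, e1, hsymm]

noncomputable def bb (f : ℝ × ℝ → ℂ) (p : ℝ × ℝ) : ℂ :=
  pt f p * conj (px f p) + px (pt f) p * conj (px (px f) p)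
    - pt f p * conj (px (px (px f)) p)

noncomputable def PP (f : ℝ × ℝ → ℂ) (p : ℝ × ℝ) : ℝ :=
  (px (pt f) p * conj (px f p) + px f p * conj (px (pt f) p)
    + px (px (pt f)) p * conj (px (px f) p) + px (px f) p * conj (px (px (pt f)) p)).re

lemma key_algebra (ft fx fxx fxxx fxxxx ftx ftxx : ℂ)
    (hpde : I * ft + fxx - fxxxx = 0) :
    2 * ((ftx * conj fx + ft * conj fxx) + (ftxx * conj fxx + ftx * conj fxxx)
        - (ftx * conj fxxx + ft * conj fxxxx)).re
      = (ftx * conj fx + fx * conj ftx + ftxx * conj fxx + fxx * conj ftxx).re := by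
  have h : fxxxx = fxx + I * ft := by linear_combination -hpde
  subst h
  simp only [map_add, map_sub, map_mul, Complex.add_re, Complex.sub_re, Complex.mul_re,
    Complex.mul_im, Complex.add_im, Complex.sub_im, Complex.conj_re, Complex.conj_im,
    Complex.I_re, Complex.I_im]
  ring

lemma norm_sq_eq_re_mul_conj (z : ℂ) : ‖z‖ ^ 2 = (z * conj z).re := by
  rw [Complex.mul_conj, Complex.normSq_eq_norm_sq, Complex.ofReal_re]

lemma hasDerivAt_conj {g : ℝ → ℂ} {g' : ℂ} {x : ℝ} (h : HasDerivAt g g' x) :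
    HasDerivAt (fun y => conj (g y)) (conj g') x := by
  have := (RCLike.conjCLE (K := ℂ)).toContinuousLinearMap.hasFDerivAt.comp_hasDerivAt x h
  simp at this; exact this

lemma px_pt_of_pt_px (f : ℝ × ℝ → ℂ) (hf : ContDiff ℝ (⊤ : ℕ∞) f) (p : ℝ × ℝ) :
    pt (px (px f)) p = px (px (pt f)) p := by
  rw [pt_px_comm (px f) (px_contDiff hf)]
  have : pt (px f) = px (pt f) := funext (pt_px_comm f hf)
  rw [this]

lemma hasDerivAt_energy_t (f : ℝ × ℝ → ℂ) (hf : ContDiff ℝ (⊤ : ℕ∞) f) (t x : ℝ) :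
    HasDerivAt (fun τ => ‖px f (τ, x)‖ ^ 2 + ‖px (px f) (τ, x)‖ ^ 2) (PP f (t, x)) t := by
  have c1 : HasDerivAt (fun τ => px f (τ, x)) (px (pt f) (t, x)) t := by
    have := hasDerivAt_slice_t (px f) (px_contDiff hf) t x
    rwa [pt_px_comm f hf] at this
  have c2 : HasDerivAt (fun τ => px (px f) (τ, x)) (px (px (pt f)) (t, x)) t := by
    have := hasDerivAt_slice_t (px (px f)) (px_contDiff (px_contDiff hf)) t x
    rwa [px_pt_of_pt_px f hf] at this
  have m1 := c1.mul (hasDerivAt_conj c1)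
  have m2 := c2.mul (hasDerivAt_conj c2)
  have hfun : (fun τ => ‖px f (τ, x)‖ ^ 2 + ‖px (px f) (τ, x)‖ ^ 2)
      = fun τ => ((px f (τ, x) * conj (px f (τ, x))).re
          + (px (px f) (τ, x) * conj (px (px f) (τ, x))).re) :=
    funext fun τ => by rw [norm_sq_eq_re_mul_conj, norm_sq_eq_re_mul_conj]
  rw [hfun]
  have h1 : HasDerivAt (fun τ => (px f (τ, x) * conj (px f (τ, x))).re)
      ((px (pt f) (t, x) * conj (px f (t, x)) + px f (t, x) * conj (px (pt f) (t, x))).re) t :=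
    Complex.reCLM.hasFDerivAt.comp_hasDerivAt t m1
  have h2 : HasDerivAt (fun τ => (px (px f) (τ, x) * conj (px (px f) (τ, x))).re)
      ((px (px (pt f)) (t, x) * conj (px (px f) (t, x))
        + px (px f) (t, x) * conj (px (px (pt f)) (t, x))).re) t :=
    Complex.reCLM.hasFDerivAt.comp_hasDerivAt t m2
  refine (h1.add h2).congr_deriv ?_
  simp only [PP, Complex.add_re]
  ring

lemma hasDerivAt_bb_x (f : ℝ × ℝ → ℂ) (hf : ContDiff ℝ (⊤ : ℕ∞) f)
    (hpde : ∀ p, I * pt f p + px (px f) p - px (px (px (px f))) p = 0) (t x : ℝ) :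
    HasDerivAt (fun y => 2 * (bb f (t, y)).re) (PP f (t, x)) x := by
  have s0 := hasDerivAt_slice_x (pt f) (pt_contDiff hf) t x
  have s1 := hasDerivAt_slice_x (px f) (px_contDiff hf) t x
  have s2 := hasDerivAt_slice_x (px (px f)) (px_contDiff (px_contDiff hf)) t x
  have s3 := hasDerivAt_slice_x (px (px (px f)))
    (px_contDiff (px_contDiff (px_contDiff hf))) t x
  have s0' := hasDerivAt_slice_x (px (pt f)) (px_contDiff (pt_contDiff hf)) t x
  have m1 := s0.mul (hasDerivAt_conj s1)
  have m2 := s0'.mul (hasDerivAt_conj s2)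
  have m3 := s0.mul (hasDerivAt_conj s3)
  have h := ((m1.add m2).sub m3)
  have hre : HasDerivAt (fun y => (bb f (t, y)).re)
      (((px (pt f) (t, x) * conj (px f (t, x)) + pt f (t, x) * conj (px (px f) (t, x)))
        + (px (px (pt f)) (t, x) * conj (px (px f) (t, x))
            + px (pt f) (t, x) * conj (px (px (px f)) (t, x)))
        - (px (pt f) (t, x) * conj (px (px (px f)) (t, x))
            + pt f (t, x) * conj (px (px (px (px f))) (t, x)))).re) x :=
    Complex.reCLM.hasFDerivAt.comp_hasDerivAt x h
  have := hre.const_mul (2 : ℝ)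
  refine this.congr_deriv ?_
  exact (key_algebra _ _ _ _ _ _ _ (hpde (t, x)))

lemma PP_continuous (f : ℝ × ℝ → ℂ) (hf : ContDiff ℝ (⊤ : ℕ∞) f) : Continuous (PP f) := by
  have c0 : Continuous (px f) := (px_contDiff hf).continuous
  have c1 : Continuous (px (px f)) := (px_contDiff (px_contDiff hf)).continuous
  have c2 : Continuous (px (pt f)) := (px_contDiff (pt_contDiff hf)).continuous
  have c3 : Continuous (px (px (pt f))) := (px_contDiff (px_contDiff (pt_contDiff hf))).continuous
  exact Complex.continuous_re.comp
    ((((c2.mul (Complex.continuous_conj.comp c0)).add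
        (c0.mul (Complex.continuous_conj.comp c2))).add
      (c3.mul (Complex.continuous_conj.comp c1))).add
      (c1.mul (Complex.continuous_conj.comp c3)))

lemma energy_continuous (f : ℝ × ℝ → ℂ) (hf : ContDiff ℝ (⊤ : ℕ∞) f) :
    Continuous (fun p : ℝ × ℝ => ‖px f p‖ ^ 2 + ‖px (px f) p‖ ^ 2) := by
  have c0 : Continuous (px f) := (px_contDiff hf).continuous
  have c1 : Continuous (px (px f)) := (px_contDiff (px_contDiff hf)).continuous
  exact ((c0.norm.pow 2).add (c1.norm.pow 2))

lemma edge_hasDerivAt (f : ℝ × ℝ → ℂ) (hf : ContDiff ℝ (⊤ : ℕ∞) f)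
    (hpde : ∀ p, I * pt f p + px (px f) p - px (px (px (px f))) p = 0) (a b t₀ : ℝ) :
    HasDerivAt (fun t => ∫ x in a..b, (‖px f (t, x)‖ ^ 2 + ‖px (px f) (t, x)‖ ^ 2))
      (2 * (bb f (t₀, b)).re - 2 * (bb f (t₀, a)).re) t₀ := by
  have hPP := PP_continuous f hf
  have hK : IsCompact ((Metric.closedBall t₀ 1) ×ˢ Set.uIcc a b) :=
    (isCompact_closedBall t₀ 1).prod isCompact_uIcc
  obtain ⟨C, hC⟩ := hK.exists_bound_of_continuousOn hPP.continuousOn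
  have key := (intervalIntegral.hasDerivAt_integral_of_dominated_loc_of_deriv_le
    (F := fun t x => ‖px f (t, x)‖ ^ 2 + ‖px (px f) (t, x)‖ ^ 2)
    (F' := fun t x => PP f (t, x)) (bound := fun _ => C) (μ := MeasureTheory.volume)
    (a := a) (b := b) (x₀ := t₀) (Metric.ball_mem_nhds t₀ one_pos)
    (Filter.Eventually.of_forall fun t =>
      ((energy_continuous f hf).comp (Continuous.prodMk_right t)).aestronglyMeasurable)
    (((energy_continuous f hf).comp (Continuous.prodMk_right t₀)).intervalIntegrable a b)
    ((hPP.comp (Continuous.prodMk_right t₀)).aestronglyMeasurable)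
    (MeasureTheory.ae_of_all _ fun x hx t ht => by
      have : ‖PP f (t, x)‖ ≤ C :=
        hC (t, x) ⟨Metric.ball_subset_closedBall ht, Set.uIoc_subset_uIcc hx⟩
      calc ‖PP f (t, x)‖ ≤ C := this)
    (intervalIntegrable_const)
    (MeasureTheory.ae_of_all _ fun x hx t ht => hasDerivAt_energy_t f hf t x)).2
  have hFTC : (∫ x in a..b, PP f (t₀, x))
      = 2 * (bb f (t₀, b)).re - 2 * (bb f (t₀, a)).re := by
    apply intervalIntegral.integral_eq_sub_of_hasDerivAt
      (fun x _ => hasDerivAt_bb_x f hf hpde t₀ x)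
    exact ((hPP.comp (Continuous.prodMk_right t₀)).intervalIntegrable a b)
  rwa [hFTC] at key

/-- Conservation of the energy `∫_G (|∂ₓu|² + |∂ₓ²u|²)` for classical solutions of the linear biharmonic
Schrödinger equation `i∂ₜu + ∂ₓ²u − ∂ₓ⁴u = 0` on the compact star graph with edges
`I₁ = (−l₁,0)`, `Iⱼ = (0,lⱼ)` and the stated boundary/transmission conditions. -/
theorem H1H2_conservation (N : ℕ) (hN : 2 ≤ N) (l α : ℕ → ℝ)
    (hl : ∀ j ∈ Finset.Icc 1 N, 0 < l j) (hα : ∀ j ∈ Finset.Icc 2 N, 0 < α j)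
    (u : ℕ → ℝ → ℝ → ℂ)  -- u j t x
    (hsm : ∀ j ∈ Finset.Icc 1 N, ContDiff ℝ (⊤ : ℕ∞) (fun p : ℝ × ℝ => u j p.1 p.2))
    (hpde : ∀ j ∈ Finset.Icc 1 N, ∀ t x : ℝ,
      Complex.I * deriv (fun τ => u j τ x) t
        + iteratedDeriv 2 (u j t) x - iteratedDeriv 4 (u j t) x = 0)
    (hbc1 : ∀ t : ℝ, u 1 t (-(l 1)) = 0 ∧ deriv (u 1 t) (-(l 1)) = 0)
    (hbcj : ∀ t : ℝ, ∀ j ∈ Finset.Icc 2 N, u j t (l j) = 0 ∧ deriv (u j t) (l j) = 0)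
    (hv0 : ∀ t : ℝ, ∀ j ∈ Finset.Icc 2 N, u 1 t 0 = (α j : ℂ) * u j t 0)
    (hv2 : ∀ t : ℝ, ∀ j ∈ Finset.Icc 2 N,
      iteratedDeriv 2 (u 1 t) 0 = (α j : ℂ) * iteratedDeriv 2 (u j t) 0)
    (hv1 : ∀ t : ℝ, deriv (u 1 t) 0 = ∑ j ∈ Finset.Icc 2 N, deriv (u j t) 0 / (α j : ℂ))
    (hv3 : ∀ t : ℝ, iteratedDeriv 3 (u 1 t) 0
      = ∑ j ∈ Finset.Icc 2 N, iteratedDeriv 3 (u j t) 0 / (α j : ℂ)) :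
    ∀ t s : ℝ,
      ((∫ x in (-(l 1))..(0:ℝ), (‖deriv (u 1 t) x‖ ^ 2 + ‖iteratedDeriv 2 (u 1 t) x‖ ^ 2))
          + ∑ j ∈ Finset.Icc 2 N, ∫ x in (0:ℝ)..(l j), (‖deriv (u j t) x‖ ^ 2 + ‖iteratedDeriv 2 (u j t) x‖ ^ 2))
      = ((∫ x in (-(l 1))..(0:ℝ), (‖deriv (u 1 s) x‖ ^ 2 + ‖iteratedDeriv 2 (u 1 s) x‖ ^ 2))
          + ∑ j ∈ Finset.Icc 2 N, ∫ x in (0:ℝ)..(l j), (‖deriv (u j s) x‖ ^ 2 + ‖iteratedDeriv 2 (u j s) x‖ ^ 2)) := by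
  intro t s
  -- uncurried versions
  set G : ℕ → ℝ × ℝ → ℂ := fun j p => u j p.1 p.2 with hGdef
  have h1N : (1 : ℕ) ∈ Finset.Icc 1 N := Finset.mem_Icc.mpr ⟨le_refl 1, le_trans one_le_two hN⟩
  have hsub : ∀ j ∈ Finset.Icc 2 N, j ∈ Finset.Icc 1 N := by
    intro j hj; simp only [Finset.mem_Icc] at *; omega
  have hsm' : ∀ j ∈ Finset.Icc 1 N, ContDiff ℝ (⊤ : ℕ∞) (G j) := fun j hj => hsm j hj
  -- bridges
  have dx1 : ∀ j ∈ Finset.Icc 1 N, ∀ τ x : ℝ, deriv (u j τ) x = px (G j) (τ, x) :=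
    fun j hj τ x => (hasDerivAt_slice_x (G j) (hsm' j hj) τ x).deriv
  have d2 : ∀ j ∈ Finset.Icc 1 N, ∀ τ x : ℝ,
      iteratedDeriv 2 (u j τ) x = px (px (G j)) (τ, x) :=
    fun j hj τ x => iteratedDeriv_two_slice (G j) (hsm' j hj) τ x
  have d3 : ∀ j ∈ Finset.Icc 1 N, ∀ τ x : ℝ,
      iteratedDeriv 3 (u j τ) x = px (px (px (G j))) (τ, x) :=
    fun j hj τ x => iteratedDeriv_three_slice (G j) (hsm' j hj) τ x
  have d4 : ∀ j ∈ Finset.Icc 1 N, ∀ τ x : ℝ,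
      iteratedDeriv 4 (u j τ) x = px (px (px (px (G j)))) (τ, x) :=
    fun j hj τ x => iteratedDeriv_four_slice (G j) (hsm' j hj) τ x
  have dt1 : ∀ j ∈ Finset.Icc 1 N, ∀ τ x : ℝ,
      deriv (fun σ => u j σ x) τ = pt (G j) (τ, x) :=
    fun j hj τ x => (hasDerivAt_slice_t (G j) (hsm' j hj) τ x).deriv
  have hpde' : ∀ j ∈ Finset.Icc 1 N, ∀ p : ℝ × ℝ,
      I * pt (G j) p + px (px (G j)) p - px (px (px (px (G j)))) p = 0 := by
    intro j hj p
    have h := hpde j hj p.1 p.2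
    rw [dt1 j hj p.1 p.2, d2 j hj p.1 p.2, d4 j hj p.1 p.2] at h
    exact h
  -- rewrite the two sides into the px-form
  have hrw : ∀ j ∈ Finset.Icc 1 N, ∀ τ x : ℝ,
      (‖deriv (u j τ) x‖ ^ 2 + ‖iteratedDeriv 2 (u j τ) x‖ ^ 2 : ℝ)
        = ‖px (G j) (τ, x)‖ ^ 2 + ‖px (px (G j)) (τ, x)‖ ^ 2 := by
    intro j hj τ x; rw [dx1 j hj τ x, d2 j hj τ x]
  have hEeq : ∀ τ : ℝ,
      ((∫ x in (-(l 1))..(0:ℝ), (‖deriv (u 1 τ) x‖ ^ 2 + ‖iteratedDeriv 2 (u 1 τ) x‖ ^ 2))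
        + ∑ j ∈ Finset.Icc 2 N, ∫ x in (0:ℝ)..(l j),
            (‖deriv (u j τ) x‖ ^ 2 + ‖iteratedDeriv 2 (u j τ) x‖ ^ 2))
      = ((∫ x in (-(l 1))..(0:ℝ), (‖px (G 1) (τ, x)‖ ^ 2 + ‖px (px (G 1)) (τ, x)‖ ^ 2))
        + ∑ j ∈ Finset.Icc 2 N, ∫ x in (0:ℝ)..(l j),
            (‖px (G j) (τ, x)‖ ^ 2 + ‖px (px (G j)) (τ, x)‖ ^ 2)) := by
    intro τ
    congr 1
    · exact intervalIntegral.integral_congr fun x _ => hrw 1 h1N τ x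
    · exact Finset.sum_congr rfl fun j hj =>
        intervalIntegral.integral_congr fun x _ => hrw j (hsub j hj) τ x
  rw [hEeq t, hEeq s]
  -- the energy function and its derivative
  have hED : ∀ τ₀ : ℝ, HasDerivAt
      (fun τ => (∫ x in (-(l 1))..(0:ℝ), (‖px (G 1) (τ, x)‖ ^ 2 + ‖px (px (G 1)) (τ, x)‖ ^ 2))
        + ∑ j ∈ Finset.Icc 2 N, ∫ x in (0:ℝ)..(l j),
            (‖px (G j) (τ, x)‖ ^ 2 + ‖px (px (G j)) (τ, x)‖ ^ 2))
      ((2 * (bb (G 1) (τ₀, 0)).re - 2 * (bb (G 1) (τ₀, -(l 1))).re)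
        + ∑ j ∈ Finset.Icc 2 N,
            (2 * (bb (G j) (τ₀, l j)).re - 2 * (bb (G j) (τ₀, 0)).re)) τ₀ := by
    intro τ₀
    exact (edge_hasDerivAt (G 1) (hsm' 1 h1N) (hpde' 1 h1N) (-(l 1)) 0 τ₀).add
      (HasDerivAt.fun_sum fun j hj =>
        edge_hasDerivAt (G j) (hsm' j (hsub j hj)) (hpde' j (hsub j hj)) 0 (l j) τ₀)
  -- the derivative vanishes
  have hW0 : ∀ τ₀ : ℝ,
      ((2 * (bb (G 1) (τ₀, 0)).re - 2 * (bb (G 1) (τ₀, -(l 1))).re)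
        + ∑ j ∈ Finset.Icc 2 N,
            (2 * (bb (G j) (τ₀, l j)).re - 2 * (bb (G j) (τ₀, 0)).re)) = 0 := by
    intro τ₀
    -- outer boundary: everything vanishes
    have z1 : pt (G 1) (τ₀, -(l 1)) = 0 := by
      have h := (hasDerivAt_slice_t (G 1) (hsm' 1 h1N) τ₀ (-(l 1))).deriv
      rw [show (fun σ => G 1 (σ, -(l 1))) = fun _ => (0 : ℂ) from
        funext fun σ => (hbc1 σ).1, deriv_const] at h
      exact h.symm
    have z2 : px (pt (G 1)) (τ₀, -(l 1)) = 0 := by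
      rw [← pt_px_comm (G 1) (hsm' 1 h1N)]
      have h := (hasDerivAt_slice_t (px (G 1)) (px_contDiff (hsm' 1 h1N)) τ₀ (-(l 1))).deriv
      rw [show (fun σ => px (G 1) (σ, -(l 1))) = fun _ => (0 : ℂ) from
        funext fun σ => by rw [← dx1 1 h1N σ (-(l 1))]; exact (hbc1 σ).2, deriv_const] at h
      exact h.symm
    have hbbl : bb (G 1) (τ₀, -(l 1)) = 0 := by
      simp only [bb, z1, z2]; ring
    have hbbj : ∀ j ∈ Finset.Icc 2 N, bb (G j) (τ₀, l j) = 0 := by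
      intro j hj
      have zj1 : pt (G j) (τ₀, l j) = 0 := by
        have h := (hasDerivAt_slice_t (G j) (hsm' j (hsub j hj)) τ₀ (l j)).deriv
        rw [show (fun σ => G j (σ, l j)) = fun _ => (0 : ℂ) from
          funext fun σ => (hbcj σ j hj).1, deriv_const] at h
        exact h.symm
      have zj2 : px (pt (G j)) (τ₀, l j) = 0 := by
        rw [← pt_px_comm (G j) (hsm' j (hsub j hj))]
        have h := (hasDerivAt_slice_t (px (G j))
          (px_contDiff (hsm' j (hsub j hj))) τ₀ (l j)).deriv
        rw [show (fun σ => px (G j) (σ, l j)) = fun _ => (0 : ℂ) from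
          funext fun σ => by rw [← dx1 j (hsub j hj) σ (l j)]; exact (hbcj σ j hj).2,
          deriv_const] at h
        exact h.symm
      simp only [bb, zj1, zj2]; ring
    -- vertex conditions in px/pt-form
    have va : ∀ j ∈ Finset.Icc 2 N, pt (G 1) (τ₀, 0) = (α j : ℂ) * pt (G j) (τ₀, 0) := by
      intro j hj
      have h1 := hasDerivAt_slice_t (G 1) (hsm' 1 h1N) τ₀ 0
      have h2 := (hasDerivAt_slice_t (G j) (hsm' j (hsub j hj)) τ₀ 0).const_mul ((α j : ℂ))
      rw [show (fun σ => G 1 (σ, 0)) = fun σ => (α j : ℂ) * G j (σ, 0) from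
        funext fun σ => hv0 σ j hj] at h1
      exact h1.unique h2
    have vb : px (G 1) (τ₀, 0) = ∑ j ∈ Finset.Icc 2 N, px (G j) (τ₀, 0) / (α j : ℂ) := by
      have h := hv1 τ₀
      rw [dx1 1 h1N τ₀ 0] at h
      rw [h]
      exact Finset.sum_congr rfl fun j hj => by rw [dx1 j (hsub j hj) τ₀ 0]
    have vc : ∀ j ∈ Finset.Icc 2 N,
        px (px (G 1)) (τ₀, 0) = (α j : ℂ) * px (px (G j)) (τ₀, 0) := by
      intro j hj
      have h := hv2 τ₀ j hj
      rw [d2 1 h1N τ₀ 0, d2 j (hsub j hj) τ₀ 0] at h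
      exact h
    have vd : px (px (px (G 1))) (τ₀, 0)
        = ∑ j ∈ Finset.Icc 2 N, px (px (px (G j))) (τ₀, 0) / (α j : ℂ) := by
      have h := hv3 τ₀
      rw [d3 1 h1N τ₀ 0] at h
      rw [h]
      exact Finset.sum_congr rfl fun j hj => by rw [d3 j (hsub j hj) τ₀ 0]
    have vax : px (pt (G 1)) (τ₀, 0)
        = ∑ j ∈ Finset.Icc 2 N, px (pt (G j)) (τ₀, 0) / (α j : ℂ) := by
      have e : (fun σ => px (G 1) (σ, 0))
          = fun σ => ∑ j ∈ Finset.Icc 2 N, px (G j) (σ, 0) / (α j : ℂ) := by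
        funext σ
        rw [← dx1 1 h1N σ 0, hv1 σ]
        exact Finset.sum_congr rfl fun j hj => by rw [dx1 j (hsub j hj) σ 0]
      have h1 := hasDerivAt_slice_t (px (G 1)) (px_contDiff (hsm' 1 h1N)) τ₀ 0
      rw [e] at h1
      have h2 : HasDerivAt (fun σ => ∑ j ∈ Finset.Icc 2 N, px (G j) (σ, 0) / (α j : ℂ))
          (∑ j ∈ Finset.Icc 2 N, pt (px (G j)) (τ₀, 0) / (α j : ℂ)) τ₀ :=
        HasDerivAt.fun_sum fun j hj =>
          (hasDerivAt_slice_t (px (G j)) (px_contDiff (hsm' j (hsub j hj))) τ₀ 0).div_const _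
      have h3 := h1.unique h2
      rw [pt_px_comm (G 1) (hsm' 1 h1N)] at h3
      rw [h3]
      exact Finset.sum_congr rfl fun j hj => by
        rw [pt_px_comm (G j) (hsm' j (hsub j hj))]
    -- vertex cancellation
    have hbb0 : bb (G 1) (τ₀, 0) = ∑ j ∈ Finset.Icc 2 N, bb (G j) (τ₀, 0) := by
      simp only [bb]
      rw [vb, vd, vax, map_sum, map_sum, Finset.mul_sum, Finset.mul_sum, Finset.sum_mul,
        ← Finset.sum_add_distrib, ← Finset.sum_sub_distrib]
      refine Finset.sum_congr rfl fun j hj => ?_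
      have hα0 : (α j : ℂ) ≠ 0 := by
        exact_mod_cast (hα j hj).ne'
      rw [va j hj, vc j hj, map_div₀, Complex.conj_ofReal, map_div₀, Complex.conj_ofReal,
        map_mul, Complex.conj_ofReal]
      field_simp
    rw [hbbl]
    have hs : ∑ j ∈ Finset.Icc 2 N, (2 * (bb (G j) (τ₀, l j)).re - 2 * (bb (G j) (τ₀, 0)).re)
        = ∑ j ∈ Finset.Icc 2 N, (-(2 * (bb (G j) (τ₀, 0)).re)) :=
      Finset.sum_congr rfl fun j hj => by rw [hbbj j hj]; simp
    rw [hs, hbb0, Complex.re_sum, Finset.mul_sum]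
    simp
  have hE0 : ∀ τ₀ : ℝ, HasDerivAt
      (fun τ => (∫ x in (-(l 1))..(0:ℝ), (‖px (G 1) (τ, x)‖ ^ 2 + ‖px (px (G 1)) (τ, x)‖ ^ 2))
        + ∑ j ∈ Finset.Icc 2 N, ∫ x in (0:ℝ)..(l j),
            (‖px (G j) (τ, x)‖ ^ 2 + ‖px (px (G j)) (τ, x)‖ ^ 2)) (0 : ℝ) τ₀ :=
    fun τ₀ => by have h := hED τ₀; rw [hW0 τ₀] at h; exact h
  exact is_const_of_deriv_eq_zero (fun τ => (hE0 τ).differentiableAt)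
    (fun τ => (hE0 τ).deriv) t s
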